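/- Let m ≥ 2 and N ≥ 1 be integers, h = 1/N, ω > 0, and let C_0, …, C_N be real numbers satisfying ∑_{γ=0}^{N} C_γ sin(hωγ) = 0, ∑_{γ=0}^{N} C_γ cos(hωγ) = 0, and ∑_{γ=0}^{N} C_γ (hγ)^α = 0 for α = 0, 1, …, m−3. Then for every integer β ≥ N: ∑_{γ=0}^{N} C_γ G_m(hβ − hγ) = D₁ sin(hωβ) + D₂ cos(hωβ) + Q(hβ), where D₁ = ((−1)^m/(4ω^{2m−1})) ∑_{γ=0}^{N} C_γ (hωγ) sin(hωγ), D₂ = ((−1)^m/(4ω^{2m−1})) ∑_{γ=0}^{N} C_γ (hωγ) cos(hωγ), and Q(t) = ((−1)^m/(2ω^{2m−1})) ∑_{k=⌊m/2⌋}^{m−2} ∑_{α=m−2}^{2k−1} ((−1)^{k+α} (m−k−1) ω^{2k−1} / ((2k−1−α)! α!)) · t^{2k−1−α} · ∑_{γ=0}^{N} C_γ (hγ)^α, a polynomial of degree at most m−3 in t. -/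

import Mathlib

open Finset Real

noncomputable section

/-- The fundamental solution `G_m`. -/
def Gm (m : ℕ) (ω : ℝ) (x : ℝ) : ℝ :=
  (-1 : ℝ) ^ m * Real.sign x / (4 * ω ^ (2 * m - 1)) *
    ((2 * (m : ℝ) - 3) * Real.sin (ω * x) - ω * x * Real.cos (ω * x)
      + 2 * ∑ k ∈ Finset.Icc 1 (m - 2),
          (-1 : ℝ) ^ k * ((m : ℝ) - (k : ℝ) - 1) * (ω * x) ^ (2 * k - 1)
            / (Nat.factorial (2 * k - 1)))

end

/-!
For `β ≥ N` every argument `hβ - hγ` is nonnegative, so the sign in `G_m` disappears and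
`G_m(hβ - hγ)` is an explicit combination of `sin`, `x cos x` and odd powers of `ω(hβ - hγ)`.
Expanding `sin` and `cos` of the difference `hωβ - hωγ` by the addition formulas, the terms
carrying `∑ C_γ sin(hωγ)` or `∑ C_γ cos(hωγ)` vanish and only `D₁`, `D₂` survive. Expanding
the powers binomially, the convolution becomes a combination of the moments `∑ C_γ (hγ)^α`;
those of order `α ≤ m - 3` vanish, and what remains is `Q(hβ)`.
-/

noncomputable def gmPolyPart (m : ℕ) (y : ℝ) : ℝ :=
  ∑ k ∈ Icc 1 (m - 2), (-1 : ℝ) ^ k * ((m : ℝ) - k - 1) * y ^ (2 * k - 1) / (2 * k - 1).factorial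

theorem Gm_of_nonneg (m : ℕ) (ω : ℝ) {x : ℝ} (hx : 0 ≤ x) :
    Gm m ω x = (-1 : ℝ) ^ m / (4 * ω ^ (2 * m - 1)) *
      ((2 * (m : ℝ) - 3) * sin (ω * x) - ω * x * cos (ω * x) + 2 * gmPolyPart m (ω * x)) := by
  rcases hx.eq_or_lt with rfl | hpos
  · have hpoly : gmPolyPart m 0 = 0 :=
      sum_eq_zero fun k hk => by
        have : 2 * k - 1 ≠ 0 := by grind
        simp [this]
    simp [Gm, hpoly]
  · rw [Gm, Real.sign_of_pos hpos, gmPolyPart]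
    ring

theorem sub_pow_div_factorial (t x : ℝ) (n : ℕ) :
    (t - x) ^ n / n.factorial =
      ∑ α ∈ range (n + 1), (-1 : ℝ) ^ α * t ^ (n - α) / ((n - α).factorial * α.factorial) * x ^ α := by
  rw [sub_eq_neg_add, add_pow, sum_div]
  refine sum_congr rfl fun α hα => ?_
  rw [Nat.cast_choose ℝ (Nat.lt_succ_iff.mp (mem_range.mp hα)), neg_pow]
  field_simp

theorem sum_range_succ_eq_sum_Icc_of_eq_zero {M : Type*} [AddCommMonoid M] {f : ℕ → M}
    {k : ℕ} (hf : ∀ α < k, f α = 0) (n : ℕ) :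
    ∑ α ∈ range (n + 1), f α = ∑ α ∈ Icc k n, f α :=
  (sum_subset (fun α _ => by grind) fun α _ _ => hf α (by grind)).symm

section Moments

variable {ι : Type*} (s : Finset ι) (C : ι → ℝ)

theorem sum_mul_sin_sub_eq_zero {b : ι → ℝ} (hsin : ∑ i ∈ s, C i * sin (b i) = 0)
    (hcos : ∑ i ∈ s, C i * cos (b i) = 0) (a : ℝ) :
    ∑ i ∈ s, C i * sin (a - b i) = 0 := by
  have key : ∀ i, C i * sin (a - b i) = sin a * (C i * cos (b i)) - cos a * (C i * sin (b i)) :=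
    fun i => by rw [sin_sub]; ring
  simp only [key, sum_sub_distrib, ← mul_sum, hsin, hcos, mul_zero, sub_zero]

theorem sum_mul_sub_mul_cos_sub {b : ι → ℝ} (hsin : ∑ i ∈ s, C i * sin (b i) = 0)
    (hcos : ∑ i ∈ s, C i * cos (b i) = 0) (a : ℝ) :
    ∑ i ∈ s, C i * ((a - b i) * cos (a - b i)) =
      -(cos a * ∑ i ∈ s, C i * b i * cos (b i) + sin a * ∑ i ∈ s, C i * b i * sin (b i)) := by
  have key : ∀ i, C i * ((a - b i) * cos (a - b i)) =
      a * cos a * (C i * cos (b i)) + a * sin a * (C i * sin (b i))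
        - cos a * (C i * b i * cos (b i)) - sin a * (C i * b i * sin (b i)) :=
    fun i => by rw [cos_sub]; ring
  simp only [key, sum_add_distrib, sum_sub_distrib, ← mul_sum, hsin, hcos]
  ring

theorem sum_mul_sub_pow_div_factorial (x : ι → ℝ) (t : ℝ) (n : ℕ) :
    ∑ i ∈ s, C i * ((t - x i) ^ n / n.factorial) =
      ∑ α ∈ range (n + 1), (-1 : ℝ) ^ α * t ^ (n - α) / ((n - α).factorial * α.factorial) *
        ∑ i ∈ s, C i * x i ^ α := by
  simp only [sub_pow_div_factorial, mul_sum]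
  rw [sum_comm]
  exact sum_congr rfl fun α _ => sum_congr rfl fun i _ => by ring

theorem sum_mul_gmPolyPart_sub (x : ι → ℝ) {m : ℕ} (hm : 2 ≤ m)
    (hmoment : ∀ α : ℕ, α + 3 ≤ m → ∑ i ∈ s, C i * x i ^ α = 0) (ω t : ℝ) :
    ∑ i ∈ s, C i * gmPolyPart m (ω * (t - x i)) =
      ∑ k ∈ Icc (m / 2) (m - 2), ∑ α ∈ Icc (m - 2) (2 * k - 1),
        (-1 : ℝ) ^ (k + α) * ((m : ℝ) - k - 1) * ω ^ (2 * k - 1)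
            / ((2 * k - 1 - α).factorial * α.factorial)
          * t ^ (2 * k - 1 - α) * ∑ i ∈ s, C i * x i ^ α := by
  have hk : ∀ k ∈ Icc 1 (m - 2), ∑ i ∈ s, C i * ((-1 : ℝ) ^ k * ((m : ℝ) - k - 1)
      * (ω * (t - x i)) ^ (2 * k - 1) / (2 * k - 1).factorial) =
      ∑ α ∈ Icc (m - 2) (2 * k - 1), (-1 : ℝ) ^ (k + α) * ((m : ℝ) - k - 1) * ω ^ (2 * k - 1)
          / ((2 * k - 1 - α).factorial * α.factorial)
        * t ^ (2 * k - 1 - α) * ∑ i ∈ s, C i * x i ^ α := by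
    intro k _
    calc _ = (-1 : ℝ) ^ k * ((m : ℝ) - k - 1) * ω ^ (2 * k - 1) *
          ∑ i ∈ s, C i * ((t - x i) ^ (2 * k - 1) / (2 * k - 1).factorial) := by
          rw [mul_sum]
          exact sum_congr rfl fun i _ => by rw [mul_pow]; ring
      _ = _ := by
          rw [sum_mul_sub_pow_div_factorial, mul_sum,
            sum_range_succ_eq_sum_Icc_of_eq_zero (k := m - 2)]
          · exact sum_congr rfl fun α _ => by ring
          · intro α hα
            rw [hmoment α (by omega), mul_zero, mul_zero]
  simp only [gmPolyPart, mul_sum (Icc 1 (m - 2))]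
  rw [sum_comm, sum_congr rfl hk]
  -- for `k < m / 2` the range `Icc (m - 2) (2k - 1)` is empty
  refine (sum_subset (fun k hk => ?_) fun k hk hk' => ?_).symm
  · grind
  · rw [Icc_eq_empty (by grind), sum_empty]

end Moments

theorem convolution_right_of_nodes_general
    (m N : ℕ) (hm : 2 ≤ m) (h ω : ℝ) (hh : h = 1 / N)
    (Cc : ℕ → ℝ)
    (hsin : ∑ γ ∈ Finset.range (N + 1), Cc γ * Real.sin (h * ω * γ) = 0)
    (hcos : ∑ γ ∈ Finset.range (N + 1), Cc γ * Real.cos (h * ω * γ) = 0)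
    (hpoly : ∀ α : ℕ, α + 3 ≤ m → ∑ γ ∈ Finset.range (N + 1), Cc γ * (h * γ) ^ α = 0)
    (D₁ D₂ : ℝ) (Q : ℝ → ℝ)
    (hD1 : D₁ = (-1 : ℝ) ^ m / (4 * ω ^ (2 * m - 1)) *
        ∑ γ ∈ Finset.range (N + 1), Cc γ * (h * ω * γ) * Real.sin (h * ω * γ))
    (hD2 : D₂ = (-1 : ℝ) ^ m / (4 * ω ^ (2 * m - 1)) *
        ∑ γ ∈ Finset.range (N + 1), Cc γ * (h * ω * γ) * Real.cos (h * ω * γ))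
    (hQ : ∀ t : ℝ, Q t = (-1 : ℝ) ^ m / (2 * ω ^ (2 * m - 1)) *
        ∑ k ∈ Finset.Icc (m / 2) (m - 2), ∑ α ∈ Finset.Icc (m - 2) (2 * k - 1),
          (-1 : ℝ) ^ (k + α) * ((m : ℝ) - (k : ℝ) - 1) * ω ^ (2 * k - 1)
              / ((Nat.factorial (2 * k - 1 - α)) * (Nat.factorial α))
            * t ^ (2 * k - 1 - α)
            * ∑ γ ∈ Finset.range (N + 1), Cc γ * (h * γ) ^ α)
    :
    ∀ β : ℤ, (N : ℤ) ≤ β →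
      ∑ γ ∈ Finset.range (N + 1), Cc γ * Gm m ω (h * (β : ℝ) - h * γ)
        = D₁ * Real.sin (h * ω * (β : ℝ)) + D₂ * Real.cos (h * ω * (β : ℝ)) + Q (h * (β : ℝ)) := by
  intro β hβ
  have hh0 : 0 ≤ h := hh ▸ by positivity
  have hGm : ∀ γ ∈ range (N + 1), Cc γ * Gm m ω (h * β - h * γ) =
      (-1 : ℝ) ^ m / (4 * ω ^ (2 * m - 1)) * ((2 * (m : ℝ) - 3) * (Cc γ * sin (h * ω * β - h * ω * γ))
        - Cc γ * ((h * ω * β - h * ω * γ) * cos (h * ω * β - h * ω * γ))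
        + 2 * (Cc γ * gmPolyPart m (ω * (h * β - h * γ)))) := by
    intro γ hγ
    have hγβ : (γ : ℤ) ≤ β := le_trans (by exact_mod_cast mem_range_succ_iff.mp hγ) hβ
    replace hγβ : (γ : ℝ) ≤ β := by exact_mod_cast hγβ
    rw [Gm_of_nonneg m ω (by nlinarith), show ω * (h * β - h * γ) = h * ω * β - h * ω * γ by ring]
    ring
  rw [sum_congr rfl hGm, ← mul_sum]
  simp only [sum_add_distrib, sum_sub_distrib, ← mul_sum]
  rw [sum_mul_sin_sub_eq_zero _ _ hsin hcos, sum_mul_sub_mul_cos_sub _ _ hsin hcos,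
    sum_mul_gmPolyPart_sub _ _ _ hm hpoly, hD1, hD2, hQ]
  ring

/-- For `β ≥ N` the convolution `v(hβ) = ∑ C_γ G_m(hβ − hγ)` equals
`D₁ sin(hωβ) + D₂ cos(hωβ) + Q(hβ)`. -/
theorem convolution_right_of_nodes
    (m N : ℕ) (hm : 2 ≤ m) (hN : 1 ≤ N) (h ω : ℝ) (hh : h = 1 / N) (hω : 0 < ω)
    (Cc : ℕ → ℝ)
    (hsin : ∑ γ ∈ Finset.range (N + 1), Cc γ * Real.sin (h * ω * γ) = 0)
    (hcos : ∑ γ ∈ Finset.range (N + 1), Cc γ * Real.cos (h * ω * γ) = 0)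
    (hpoly : ∀ α : ℕ, α + 3 ≤ m → ∑ γ ∈ Finset.range (N + 1), Cc γ * (h * γ) ^ α = 0)
    (D₁ D₂ : ℝ) (Q : ℝ → ℝ)
    (hD1 : D₁ = (-1 : ℝ) ^ m / (4 * ω ^ (2 * m - 1)) *
        ∑ γ ∈ Finset.range (N + 1), Cc γ * (h * ω * γ) * Real.sin (h * ω * γ))
    (hD2 : D₂ = (-1 : ℝ) ^ m / (4 * ω ^ (2 * m - 1)) *
        ∑ γ ∈ Finset.range (N + 1), Cc γ * (h * ω * γ) * Real.cos (h * ω * γ))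
    (hQ : ∀ t : ℝ, Q t = (-1 : ℝ) ^ m / (2 * ω ^ (2 * m - 1)) *
        ∑ k ∈ Finset.Icc (m / 2) (m - 2), ∑ α ∈ Finset.Icc (m - 2) (2 * k - 1),
          (-1 : ℝ) ^ (k + α) * ((m : ℝ) - (k : ℝ) - 1) * ω ^ (2 * k - 1)
              / ((Nat.factorial (2 * k - 1 - α)) * (Nat.factorial α))
            * t ^ (2 * k - 1 - α)
            * ∑ γ ∈ Finset.range (N + 1), Cc γ * (h * γ) ^ α)
    :
    ∀ β : ℤ, (N : ℤ) ≤ β →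
      ∑ γ ∈ Finset.range (N + 1), Cc γ * Gm m ω (h * (β : ℝ) - h * γ)
        = D₁ * Real.sin (h * ω * (β : ℝ)) + D₂ * Real.cos (h * ω * (β : ℝ)) + Q (h * (β : ℝ)) :=
  convolution_right_of_nodes_general m N hm h ω hh Cc hsin hcos hpoly D₁ D₂ Q hD1 hD2 hQ
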